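/- scc(K_t(2)) is asymptotically equal to t·log₂ t; that is, the ratio scc(K_t(2)) / (t·log₂ t) tends to 1 as t tends to infinity. -/

import Mathlib

open Finset

/-- A clique covering of `G`: a finite family of cliques covering every edge. -/
def IsCliqueCover {V : Type*} (G : SimpleGraph V) (𝒞 : Finset (Finset V)) : Prop :=
  (∀ C ∈ 𝒞, G.IsClique (C : Set V)) ∧
  ∀ u v, G.Adj u v → ∃ C ∈ 𝒞, u ∈ C ∧ v ∈ C

/-- A clique partition of `G`: every edge lies in exactly one clique of the family. -/
def IsCliquePartition {V : Type*} (G : SimpleGraph V) (𝒞 : Finset (Finset V)) : Prop :=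
  (∀ C ∈ 𝒞, G.IsClique (C : Set V)) ∧
  ∀ u v, G.Adj u v → ∃! C, C ∈ 𝒞 ∧ u ∈ C ∧ v ∈ C

/-- The sigma clique cover number: minimum total size of cliques in a clique covering. -/
noncomputable def scc {V : Type*} (G : SimpleGraph V) : ℕ :=
  sInf {k | ∃ 𝒞, IsCliqueCover G 𝒞 ∧ ∑ C ∈ 𝒞, C.card = k}

/-- The sigma clique partition number: minimum total size of cliques in a clique partition. -/
noncomputable def scp {V : Type*} (G : SimpleGraph V) : ℕ :=
  sInf {k | ∃ 𝒞, IsCliquePartition G 𝒞 ∧ ∑ C ∈ 𝒞, C.card = k}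

/-- The clique cover number: minimum number of cliques in a clique covering. -/
noncomputable def cc {V : Type*} (G : SimpleGraph V) : ℕ :=
  sInf {k | ∃ 𝒞, IsCliqueCover G 𝒞 ∧ 𝒞.card = k}

/-- The clique partition number: minimum number of cliques in a clique partition. -/
noncomputable def cp {V : Type*} (G : SimpleGraph V) : ℕ :=
  sInf {k | ∃ 𝒞, IsCliquePartition G 𝒞 ∧ 𝒞.card = k}

/-- `scc'`: the minimum total size of cliques over clique coverings achieving `cc G`. -/
noncomputable def scc' {V : Type*} (G : SimpleGraph V) : ℕ :=
  sInf {k | ∃ 𝒞, IsCliqueCover G 𝒞 ∧ 𝒞.card = cc G ∧ ∑ C ∈ 𝒞, C.card = k}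

/-- The Cocktail party graph `K_t(2)`: the complete graph on `2t` vertices minus a perfect
matching. Vertices are pairs `(i, a)`; two vertices are adjacent iff their first
coordinates differ. -/
def cocktailParty (t : ℕ) : SimpleGraph (Fin t × Fin 2) where
  Adj u v := u.1 ≠ v.1
  symm := ⟨fun _ _ h => h.symm⟩
  loopless := ⟨fun _ h => h rfl⟩

/-!
Lower bound: in a clique cover `𝒞` of `K_t(2)` let `A i`, `B i` be the cliques through `(i, 0)`
and `(i, 1)`. They are disjoint, as `(i, 0)` and `(i, 1)` are not adjacent, while `A i` meets
`B j` for `i ≠ j`, as `(i, 0)` and `(j, 1)` are. So the intervals `[B i, 𝒞 \ A i]` of subfamilies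
of `𝒞` are pairwise disjoint, which is the Kraft inequality `∑ 2 ^ -(|A i| + |B i|) ≤ 1`. By
convexity of `x ↦ 2 ^ -x` this forces `∑ (|A i| + |B i|) ≥ t log₂ t`, and the left-hand side is
the total size of `𝒞`.

Upper bound: if `i ↦ S i` is injective from `Fin t` to the `k`-subsets of `Fin (2k)`, the cliques
`{(i, [x ∈ S i])}` for `x : Fin (2k)`, together with the two sides `{(i, 0)}` and `{(i, 1)}`,
cover `K_t(2)`, because distinct sets of equal size are incomparable. This costs `(2k + 2) t`,
and `t ≤ C(2k, k)` as soon as `2k ≥ log₂ t + log₂ log₂ t + 2`.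
-/

open Filter Real Topology

theorem sum_two_pow_sub_card_le_two_pow {ι α : Type*} [DecidableEq α] (I : Finset ι)
    (s : Finset α) (A B : ι → Finset α) (hA : ∀ i ∈ I, A i ⊆ s) (hB : ∀ i ∈ I, B i ⊆ s \ A i)
    (hAB : ∀ i ∈ I, ∀ j ∈ I, i ≠ j → ¬Disjoint (A i) (B j)) :
    ∑ i ∈ I, 2 ^ (#s - #(A i) - #(B i)) ≤ 2 ^ #s := by
  have hdisj : (I : Set ι).PairwiseDisjoint fun i => Icc (B i) (s \ A i) := by
    intro i hi j hj hij
    refine disjoint_left.2 fun T hTi hTj => ?_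
    obtain ⟨C, hCA, hCB⟩ := not_disjoint_iff.1 (hAB i hi j hj hij)
    exact (mem_sdiff.1 ((mem_Icc.1 hTi).2 ((mem_Icc.1 hTj).1 hCB))).2 hCA
  calc ∑ i ∈ I, 2 ^ (#s - #(A i) - #(B i))
      = ∑ i ∈ I, #(Icc (B i) (s \ A i)) := sum_congr rfl fun i hi => by
        rw [card_Icc_finset (hB i hi), card_sdiff_of_subset (hA i hi)]
    _ = #(I.biUnion fun i => Icc (B i) (s \ A i)) := (card_biUnion hdisj).symm
    _ ≤ #s.powerset := card_le_card fun T hT => by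
        obtain ⟨i, -, hT⟩ := mem_biUnion.1 hT
        exact mem_powerset.2 ((mem_Icc.1 hT).2.trans sdiff_subset)
    _ = 2 ^ #s := card_powerset s

theorem sum_inv_two_pow_card_add_card_le_one {ι α : Type*} [DecidableEq α] (I : Finset ι)
    (s : Finset α) (A B : ι → Finset α) (hA : ∀ i ∈ I, A i ⊆ s) (hB : ∀ i ∈ I, B i ⊆ s \ A i)
    (hAB : ∀ i ∈ I, ∀ j ∈ I, i ≠ j → ¬Disjoint (A i) (B j)) :
    ∑ i ∈ I, (2⁻¹ : ℝ) ^ (#(A i) + #(B i)) ≤ 1 := by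
  have hpos : (0 : ℝ) < 2 ^ #s := by positivity
  have hterm : ∀ i ∈ I, (2⁻¹ : ℝ) ^ (#(A i) + #(B i)) = 2 ^ (#s - #(A i) - #(B i)) / 2 ^ #s := by
    intro i hi
    have hle : #(A i) + #(B i) ≤ #s := by
      have := card_le_card (hB i hi)
      rw [card_sdiff_of_subset (hA i hi)] at this
      have := card_le_card (hA i hi)
      omega
    rw [eq_div_iff hpos.ne', inv_pow, inv_mul_eq_div, div_eq_iff (by positivity), ← pow_add]
    congr 1
    omega
  rw [sum_congr rfl hterm, ← sum_div, div_le_one hpos]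
  exact_mod_cast sum_two_pow_sub_card_le_two_pow I s A B hA hB hAB

theorem card_mul_logb_card_le_sum {ι : Type*} (I : Finset ι) (d : ι → ℕ)
    (h : ∑ i ∈ I, (2⁻¹ : ℝ) ^ d i ≤ 1) : #I * logb 2 #I ≤ ∑ i ∈ I, (d i : ℝ) := by
  rcases I.eq_empty_or_nonempty with rfl | hI
  · simp
  have ht : (0 : ℝ) < #I := by exact_mod_cast hI.card_pos
  set a := logb 2 #I
  -- the tangent line of `x ↦ 2 ^ -x` at `x = a`
  have tangent : ∀ x : ℝ, (1 + (a - x) * log 2) / #I ≤ 2 ^ (-x) := fun x => by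
    have h2a : (2 : ℝ) ^ a = #I := rpow_logb two_pos (by norm_num) ht
    rw [div_le_iff₀ ht, ← h2a, ← rpow_add two_pos, rpow_def_of_pos two_pos,
      show log 2 * (-x + a) = (a - x) * log 2 by ring, add_comm 1]
    exact add_one_le_exp _
  have hsum : ∑ i ∈ I, (1 + (a - d i) * log 2) / #I ≤ 1 :=
    (sum_le_sum fun i _ => by simpa [rpow_neg, rpow_natCast] using tangent (d i)).trans h
  rw [← sum_div, div_le_one ht, sum_add_distrib, ← sum_mul, sum_sub_distrib, sum_const,
    sum_const, nsmul_eq_mul, nsmul_eq_mul] at hsum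
  nlinarith [log_pos one_lt_two]

theorem scc_le_sum_card {V : Type*} {G : SimpleGraph V} {𝒞 : Finset (Finset V)}
    (h𝒞 : IsCliqueCover G 𝒞) : scc G ≤ ∑ C ∈ 𝒞, #C :=
  Nat.sInf_le ⟨𝒞, h𝒞, rfl⟩

theorem exists_isCliqueCover_sum_card_eq_scc {V : Type*} [Fintype V] (G : SimpleGraph V) :
    ∃ 𝒞, IsCliqueCover G 𝒞 ∧ ∑ C ∈ 𝒞, #C = scc G := by
  classical
  have hcliques : IsCliqueCover G {C | G.IsClique (C : Set V)} := by
    refine ⟨fun C hC => (mem_filter.1 hC).2, fun u v huv => ⟨{u, v}, ?_, by simp, by simp⟩⟩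
    rw [mem_filter, coe_pair, SimpleGraph.isClique_pair]
    exact ⟨mem_univ _, fun _ => huv⟩
  exact Nat.sInf_mem (s := {k | ∃ 𝒞, IsCliqueCover G 𝒞 ∧ ∑ C ∈ 𝒞, #C = k}) ⟨_, _, hcliques, rfl⟩

theorem sum_card_eq_sum_card_filter_mem {α : Type*} [Fintype α] [DecidableEq α]
    (𝒞 : Finset (Finset α)) : ∑ C ∈ 𝒞, #C = ∑ v, #{C ∈ 𝒞 | v ∈ C} := by
  simpa [bipartiteAbove, bipartiteBelow, filter_mem_eq_inter] using
    sum_card_bipartiteAbove_eq_sum_card_bipartiteBelow (s := 𝒞) (t := univ) (fun C v => v ∈ C)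

namespace cocktailParty

variable {t : ℕ}

theorem mul_logb_le_sum_card_of_isCliqueCover {𝒞 : Finset (Finset (Fin t × Fin 2))}
    (h𝒞 : IsCliqueCover (cocktailParty t) 𝒞) : t * logb 2 t ≤ ∑ C ∈ 𝒞, (#C : ℝ) := by
  set A : Fin t → Finset (Finset (Fin t × Fin 2)) := fun i => {C ∈ 𝒞 | (i, 0) ∈ C}
  set B : Fin t → Finset (Finset (Fin t × Fin 2)) := fun i => {C ∈ 𝒞 | (i, 1) ∈ C}
  have hB : ∀ i ∈ univ, B i ⊆ 𝒞 \ A i := by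
    intro i _ C hC
    obtain ⟨hC𝒞, hi1⟩ := mem_filter.1 hC
    refine mem_sdiff.2 ⟨hC𝒞, fun hCA => ?_⟩
    exact h𝒞.1 C hC𝒞 (mem_filter.1 hCA).2 hi1 (by simp) rfl
  have hAB : ∀ i ∈ univ, ∀ j ∈ univ, i ≠ j → ¬Disjoint (A i) (B j) := by
    intro i _ j _ hij
    obtain ⟨C, hC, hi0, hj1⟩ := h𝒞.2 (i, 0) (j, 1) hij
    exact not_disjoint_iff.2 ⟨C, mem_filter.2 ⟨hC, hi0⟩, mem_filter.2 ⟨hC, hj1⟩⟩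
  have hconvex := card_mul_logb_card_le_sum univ (fun i => #(A i) + #(B i))
    (sum_inv_two_pow_card_add_card_le_one univ 𝒞 A B (fun _ _ => filter_subset _ _) hB hAB)
  have hsum : ∑ C ∈ 𝒞, #C = ∑ i, (#(A i) + #(B i)) := by
    rw [sum_card_eq_sum_card_filter_mem, Fintype.sum_prod_type]
    simp only [Fin.sum_univ_two, A, B]
  rw [card_univ, Fintype.card_fin] at hconvex
  exact_mod_cast hconvex.trans_eq (by exact_mod_cast hsum.symm)

theorem mul_logb_le_scc (t : ℕ) : t * logb 2 t ≤ scc (cocktailParty t) := by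
  obtain ⟨𝒞, h𝒞, hsum⟩ := exists_isCliqueCover_sum_card_eq_scc (cocktailParty t)
  rw [← hsum, Nat.cast_sum]
  exact mul_logb_le_sum_card_of_isCliqueCover h𝒞

def transversal (f : Fin t → Fin 2) : Finset (Fin t × Fin 2) :=
  univ.image fun i => (i, f i)

theorem isClique_transversal (f : Fin t → Fin 2) :
    (cocktailParty t).IsClique (transversal f : Set (Fin t × Fin 2)) := by
  rintro _ hu _ hv huv
  obtain ⟨i, -, rfl⟩ := mem_image.1 hu
  obtain ⟨j, -, rfl⟩ := mem_image.1 hv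
  rintro (rfl : i = j)
  exact huv rfl

theorem card_transversal (f : Fin t → Fin 2) : #(transversal f) = t := by
  rw [transversal, card_image_of_injective _ fun i j h => congrArg Prod.fst h, card_univ,
    Fintype.card_fin]

theorem scc_le_card_mul {F : Finset (Fin t → Fin 2)}
    (hF : ∀ i j, i ≠ j → ∀ a b, ∃ f ∈ F, f i = a ∧ f j = b) :
    scc (cocktailParty t) ≤ #F * t := by
  classical
  have hcover : IsCliqueCover (cocktailParty t) (F.image transversal) := by
    refine ⟨fun C hC => ?_, fun ⟨i, a⟩ ⟨j, b⟩ hij => ?_⟩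
    · obtain ⟨f, -, rfl⟩ := mem_image.1 hC
      exact isClique_transversal f
    · obtain ⟨f, hf, rfl, rfl⟩ := hF i j hij a b
      exact ⟨transversal f, mem_image_of_mem _ hf, mem_image_of_mem _ (mem_univ i),
        mem_image_of_mem _ (mem_univ j)⟩
  calc scc (cocktailParty t) ≤ ∑ C ∈ F.image transversal, #C := scc_le_sum_card hcover
    _ ≤ ∑ f ∈ F, #(transversal f) := sum_image_le_of_nonneg fun _ _ => Nat.zero_le _
    _ = #F * t := by simp only [card_transversal, sum_const, smul_eq_mul]

theorem scc_le_of_isAntichain {α : Type*} [Fintype α] {S : Fin t → Finset α}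
    (hS : ∀ i j, i ≠ j → ¬S i ⊆ S j) : scc (cocktailParty t) ≤ (Fintype.card α + 2) * t := by
  classical
  set F : Finset (Fin t → Fin 2) :=
    insert (fun _ => 0) (insert (fun _ => 1) (univ.image fun x i => if x ∈ S i then 1 else 0))
  have hF : #F ≤ Fintype.card α + 2 :=
    (card_insert_le _ _).trans (Nat.add_le_add_right ((card_insert_le _ _).trans
      (Nat.add_le_add_right (card_image_le.trans_eq card_univ) 1)) 1)
  refine (scc_le_card_mul fun i j hij a b => ?_).trans (Nat.mul_le_mul_right t hF)
  have separate : ∀ i j, i ≠ j → ∃ f ∈ F, f i = 1 ∧ f j = 0 := by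
    intro i j hij
    obtain ⟨x, hxi, hxj⟩ := not_subset.1 (hS i j hij)
    exact ⟨_, mem_insert_of_mem (mem_insert_of_mem (mem_image_of_mem _ (mem_univ x))),
      by simp [hxi], by simp [hxj]⟩
  fin_cases a <;> fin_cases b
  · exact ⟨_, mem_insert_self _ _, rfl, rfl⟩
  · obtain ⟨f, hf, hj, hi⟩ := separate j i hij.symm
    exact ⟨f, hf, hi, hj⟩
  · exact separate i j hij
  · exact ⟨_, mem_insert_of_mem (mem_insert_self _ _), rfl, rfl⟩

theorem scc_le_of_le_centralBinom {k : ℕ} (h : t ≤ k.centralBinom) :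
    scc (cocktailParty t) ≤ (2 * k + 2) * t := by
  have hcard :
      Fintype.card (Fin t) ≤ Fintype.card (powersetCard k (univ : Finset (Fin (2 * k)))) := by
    simpa [Nat.centralBinom] using h
  obtain ⟨e⟩ := Function.Embedding.nonempty_of_card_le hcard
  have hS : ∀ i j, i ≠ j → ¬(e i : Finset (Fin (2 * k))) ⊆ e j := fun i j hij hsub =>
    hij (e.injective (Subtype.ext (eq_of_subset_of_card_le hsub
      (by rw [(mem_powersetCard.1 (e i).2).2, (mem_powersetCard.1 (e j).2).2]))))
  simpa using scc_le_of_isAntichain hS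

theorem scc_le_of_two_mul_mul_le_four_pow {k : ℕ} (hk : 0 < k)
    (h : 2 * k * t ≤ 4 ^ k) : scc (cocktailParty t) ≤ (2 * k + 2) * t :=
  scc_le_of_le_centralBinom <| Nat.le_of_mul_le_mul_left
    (h.trans (Nat.four_pow_le_two_mul_self_mul_centralBinom k hk)) (by omega)

theorem scc_le_mul_logb (ht : 4 ≤ t) :
    (scc (cocktailParty t) : ℝ) ≤ t * (logb 2 t + logb 2 (logb 2 t) + 6) := by
  set L := logb 2 (t : ℝ)
  have htpos : (0 : ℝ) < t := by positivity
  have hL : 2 ≤ L := (le_logb_iff_rpow_le one_lt_two htpos).2 (by norm_num; exact_mod_cast ht)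
  have hlogL : 1 ≤ logb 2 L := (le_logb_iff_rpow_le one_lt_two (by linarith)).2 (by simpa using hL)
  have hlogL_le : logb 2 L ≤ 2 * (L - 1) := by
    rw [logb, div_le_iff₀ (log_pos one_lt_two)]
    nlinarith [log_le_sub_one_of_pos (by linarith : 0 < L), log_two_gt_d9]
  -- `2k` lies within `2` above `L + log₂ L + 2`, the exponent with `2 ^ _ = 4 L t`; so `2k ≤ 4 L`
  set k := ⌈(L + logb 2 L) / 2⌉₊ + 1
  have hk_ge : L + logb 2 L + 2 ≤ 2 * k := by
    have := Nat.le_ceil ((L + logb 2 L) / 2)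
    push_cast [k]
    linarith
  have hk_le : 2 * k ≤ L + logb 2 L + 4 := by
    have := Nat.ceil_lt_add_one (by linarith : 0 ≤ (L + logb 2 L) / 2)
    push_cast [k]
    linarith
  have h4k : (2 * k * t : ℝ) ≤ 4 ^ k := calc
    (2 * k * t : ℝ) ≤ 4 * L * t := by nlinarith
    _ = 2 ^ (L + logb 2 L + 2) := by
      rw [rpow_add two_pos, rpow_add two_pos, rpow_logb two_pos (by norm_num) htpos,
        rpow_logb two_pos (by norm_num) (by linarith)]
      norm_num
      ring
    _ ≤ 2 ^ ((2 * k : ℕ) : ℝ) := rpow_le_rpow_of_exponent_le one_le_two (by push_cast; linarith)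
    _ = 4 ^ k := by rw [rpow_natCast, pow_mul]; norm_num
  have hscc := scc_le_of_two_mul_mul_le_four_pow (Nat.succ_pos _) (by exact_mod_cast h4k)
  calc (scc (cocktailParty t) : ℝ) ≤ (2 * k + 2) * t := by exact_mod_cast hscc
    _ ≤ t * (L + logb 2 L + 6) := by nlinarith

end cocktailParty

/-- `scc(K_t(2)) ∼ t·log₂ t`: the ratio `scc(K_t(2)) / (t·log₂ t)` tends to `1`. -/
theorem stmt_16 :
    Filter.Tendsto (fun t : ℕ => (scc (cocktailParty t) : ℝ) / (t * Real.logb 2 t))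
      Filter.atTop (nhds 1) := by
  have hL : Tendsto (fun t : ℕ => logb 2 (t : ℝ)) atTop atTop :=
    (tendsto_logb_atTop one_lt_two).comp tendsto_natCast_atTop_atTop
  have herror : Tendsto (fun t : ℕ => 1 + (logb 2 (logb 2 t) + 6) / logb 2 t) atTop (𝓝 1) := by
    have h := ((isLittleO_logb_id_atTop (b := 2)).tendsto_div_nhds_zero.comp hL).add
      (tendsto_const_nhds (x := (6 : ℝ)) |>.div_atTop hL)
    simpa [add_div] using h.const_add 1
  have hpos : ∀ᶠ t : ℕ in atTop, (0 : ℝ) < t * logb 2 t := by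
    filter_upwards [eventually_ge_atTop 2] with t ht
    exact mul_pos (by positivity) (logb_pos one_lt_two (by exact_mod_cast ht))
  refine tendsto_of_tendsto_of_tendsto_of_le_of_le' tendsto_const_nhds herror ?_ ?_
  · filter_upwards [hpos] with t ht
    exact (one_le_div ht).2 (cocktailParty.mul_logb_le_scc t)
  · filter_upwards [hpos, eventually_ge_atTop 4] with t ht ht4
    rw [div_le_iff₀ ht]
    have hL0 : logb 2 (t : ℝ) ≠ 0 := (logb_pos one_lt_two (by norm_cast; omega)).ne'
    refine (cocktailParty.scc_le_mul_logb ht4).trans_eq ?_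
    field_simp
    ring
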